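/- compress(Z_k) is the sequence 1,2,...,k−1,k,k−1,...,2,1 of length 2k−1. -/

import Mathlib

/-!
In `Z_{k+1} = Z_k ++ [k+1] ++ Z_k` every letter of the left copy of `Z_k` has the larger letter
`k+1` to its right, so it survives compression iff no earlier letter exceeds it, i.e. iff it is a
prefix maximum; symmetrically, the letters of the right copy that survive are the suffix maxima.
The prefix maxima of `Z_k` are `1, …, k` and its suffix maxima are `k, …, 1`, because the middle
letter of `Z_k` exceeds every other letter.
-/

/-- Zimin words: `zimin 1 = [1]`, `zimin k = zimin (k-1) ++ [k] ++ zimin (k-1)`. -/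
def zimin : ℕ → List ℕ
  | 0 => []
  | k + 1 => zimin k ++ [k + 1] ++ zimin k

/-- A sequence is `j`-interleaved if among each two adjacent elements exactly one equals `j`. -/
def Interleaved (j : ℕ) (u : List ℕ) : Prop :=
  u.Chain' (fun a b => Xor' (a = j) (b = j))

/-- Delete from `u` all letters smaller than `j`. -/
def delBelow (j : ℕ) (u : List ℕ) : List ℕ :=
  u.filter (fun a => decide (j ≤ a))

/-- `compress u` removes every element of `u` that has a strictly larger element
both somewhere to its left and somewhere to its right. -/
def compress (u : List ℕ) : List ℕ :=
  (List.range u.length).filterMap fun i =>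
    if ((u.take i).any fun l => decide (u.getD i 0 < l)) &&
       ((u.drop (i + 1)).any fun r => decide (u.getD i 0 < r))
    then none else some (u.getD i 0)

variable {α : Type*}

/-- The letters `x` of `u = l ++ x :: r` for which `p l x r` holds, in order. -/
def filterWithContext (p : List α → α → List α → Bool) : List α → List α
  | [] => []
  | a :: t => (if p [] a t then [a] else []) ++ filterWithContext (fun l x r => p (a :: l) x r) t

theorem filterWithContext_eq_filterMap_range (d : α) (p : List α → α → List α → Bool)
    (u : List α) :
    filterWithContext p u = (List.range u.length).filterMap fun i =>
      if p (u.take i) (u.getD i d) (u.drop (i + 1)) then some (u.getD i d) else none := by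
  induction u generalizing p with
  | nil => rfl
  | cons a t ih =>
    rw [List.length_cons, List.range_succ_eq_map, List.filterMap_cons, List.filterMap_map,
      filterWithContext, ih]
    simp only [Function.comp_def, List.take_zero, List.take_succ_cons, List.getD_cons_zero,
      List.getD_cons_succ, List.drop_succ_cons, List.drop_zero]
    cases p [] a t <;> rfl

theorem filterWithContext_append (p : List α → α → List α → Bool) (u v : List α) :
    filterWithContext p (u ++ v) =
      filterWithContext (fun l x r => p l x (r ++ v)) u ++
        filterWithContext (fun l x r => p (u ++ l) x r) v := by
  induction u generalizing p with
  | nil => rfl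
  | cons a t ih => simp [filterWithContext, ih]

theorem filterWithContext_congr {p q : List α → α → List α → Bool} {u : List α}
    (h : ∀ l, ∀ x ∈ u, ∀ r, p l x r = q l x r) :
    filterWithContext p u = filterWithContext q u := by
  induction u generalizing p q with
  | nil => rfl
  | cons a t ih =>
    simp only [filterWithContext, h [] a (by simp) t]
    rw [ih fun l x hx r => h (a :: l) x (by simp [hx]) r]

theorem filterWithContext_eq_nil {p : List α → α → List α → Bool} {u : List α}
    (h : ∀ l, ∀ x ∈ u, ∀ r, p l x r = false) : filterWithContext p u = [] := by
  rw [filterWithContext_congr h]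
  induction u with
  | nil => rfl
  | cons a t ih => simpa [filterWithContext] using ih fun _ x hx _ => h _ x (by simp [hx]) _

theorem filterWithContext_append_singleton_append (p : List α → α → List α → Bool)
    (w : List α) (c : α) (v : List α) :
    filterWithContext p (w ++ [c] ++ v) =
      filterWithContext (fun l x r => p l x (r ++ c :: v)) w ++
        (if p w c v then [c] else []) ++
        filterWithContext (fun l x r => p (w ++ c :: l) x r) v := by
  simp [filterWithContext_append, filterWithContext]

section Maxima

variable [LinearOrder α]

def prefixMaxima (u : List α) : List α :=
  filterWithContext (fun l x _ => !l.any (x < ·)) u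

def suffixMaxima (u : List α) : List α :=
  filterWithContext (fun _ x r => !r.any (x < ·)) u

theorem prefixMaxima_append_singleton_append {w v : List α} {c : α}
    (hw : ∀ x ∈ w, x ≤ c) (hv : ∀ x ∈ v, x < c) :
    prefixMaxima (w ++ [c] ++ v) = prefixMaxima w ++ [c] := by
  have hc : (!(w.any (c < ·))) = true := by simpa using hw
  have hright : filterWithContext (fun l x _ => !(w ++ c :: l).any (x < ·)) v = [] :=
    filterWithContext_eq_nil fun _ x hx _ => by simp [hv x hx]
  rw [prefixMaxima, filterWithContext_append_singleton_append, hright, if_pos hc,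
    List.append_nil]
  rfl

theorem suffixMaxima_append_singleton_append {w v : List α} {c : α}
    (hw : ∀ x ∈ w, x < c) (hv : ∀ x ∈ v, x ≤ c) :
    suffixMaxima (w ++ [c] ++ v) = c :: suffixMaxima v := by
  have hc : (!(v.any (c < ·))) = true := by simpa using hv
  have hleft : filterWithContext (fun _ x r => !(r ++ c :: v).any (x < ·)) w = [] :=
    filterWithContext_eq_nil fun _ x hx _ => by simp [hw x hx]
  rw [suffixMaxima, filterWithContext_append_singleton_append, hleft, if_pos hc]
  rfl

end Maxima

theorem compress_eq_filterWithContext (u : List ℕ) :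
    compress u = filterWithContext (fun l x r => !(l.any (x < ·) && r.any (x < ·))) u := by
  rw [compress, filterWithContext_eq_filterMap_range 0]
  refine List.filterMap_congr fun i _ => ?_
  cases ((u.take i).any fun l => decide (u.getD i 0 < l)) &&
    ((u.drop (i + 1)).any fun r => decide (u.getD i 0 < r)) <;> rfl

theorem compress_append_singleton_append {w v : List ℕ} {c : ℕ}
    (hw : ∀ x ∈ w, x < c) (hv : ∀ x ∈ v, x < c) :
    compress (w ++ [c] ++ v) = prefixMaxima w ++ [c] ++ suffixMaxima v := by
  have hc : (!((w.any (c < ·)) && v.any (c < ·))) = true := by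
    simpa using Or.inl fun x hx => (hw x hx).le
  have hleft : filterWithContext (fun l x r => !(l.any (x < ·) && (r ++ c :: v).any (x < ·))) w =
      prefixMaxima w :=
    filterWithContext_congr fun _ x hx _ => by simp [hw x hx]
  have hright : filterWithContext (fun l x r => !((w ++ c :: l).any (x < ·) && r.any (x < ·))) v =
      suffixMaxima v :=
    filterWithContext_congr fun _ x hx _ => by simp [hv x hx]
  rw [compress_eq_filterWithContext, filterWithContext_append_singleton_append, hleft, hright,
    if_pos hc]

theorem zimin_succ (k : ℕ) : zimin (k + 1) = zimin k ++ [k + 1] ++ zimin k := rfl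

theorem lt_of_mem_zimin {k x : ℕ} (hx : x ∈ zimin k) : x < k + 1 := by
  induction k with
  | zero => simp [zimin] at hx
  | succ n ih =>
    simp only [zimin_succ, List.mem_append, List.mem_singleton] at hx
    obtain (hx | rfl) | hx := hx
    · exact (ih hx).trans (n + 1).lt_succ_self
    · exact (n + 1).lt_succ_self
    · exact (ih hx).trans (n + 1).lt_succ_self

theorem prefixMaxima_zimin (k : ℕ) : prefixMaxima (zimin k) = List.range' 1 k := by
  induction k with
  | zero => rfl
  | succ n ih =>
    rw [zimin_succ, prefixMaxima_append_singleton_append (fun _ hx => (lt_of_mem_zimin hx).le)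
      fun _ => lt_of_mem_zimin, ih, List.range'_1_concat, add_comm]

theorem suffixMaxima_zimin (k : ℕ) : suffixMaxima (zimin k) = (List.range' 1 k).reverse := by
  induction k with
  | zero => rfl
  | succ n ih =>
    rw [zimin_succ, suffixMaxima_append_singleton_append (fun _ => lt_of_mem_zimin)
      fun _ hx => (lt_of_mem_zimin hx).le, ih, List.range'_1_concat, add_comm, List.reverse_concat]

theorem compress_zimin_general (k : ℕ) :
    compress (zimin k) = List.range' 1 k ++ (List.range' 1 (k - 1)).reverse ∧
      (compress (zimin k)).length = 2 * k - 1 := by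
  have h : compress (zimin k) = List.range' 1 k ++ (List.range' 1 (k - 1)).reverse := by
    cases k with
    | zero => rfl
    | succ n =>
      rw [zimin_succ, compress_append_singleton_append (fun _ => lt_of_mem_zimin)
        (fun _ => lt_of_mem_zimin), prefixMaxima_zimin, suffixMaxima_zimin,
        List.range'_1_concat, Nat.add_sub_cancel, add_comm]
  refine ⟨h, ?_⟩
  rw [h, List.length_append, List.length_range', List.length_reverse, List.length_range']
  omega

/-- `compress (Z_k)` is the sequence `1,2,…,k-1,k,k-1,…,2,1` of length `2k - 1`. -/
theorem compress_zimin (k : ℕ) (hk : 1 ≤ k) :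
    compress (zimin k) = List.range' 1 k ++ (List.range' 1 (k - 1)).reverse ∧
      (compress (zimin k)).length = 2 * k - 1 :=
  compress_zimin_general k
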